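/- Under the assumptions ν_min ≤ ν̂(s) ≤ ν₀ and ν_min ≤ (ν̂(s)s)' ≤ ν₀, the map T(W) = ν̂(|W|)W on ℝ² is strongly monotone: (T(φ+ψ) − T(φ)) · ψ ≥ ν_min |ψ|² for all φ, ψ ∈ ℝ². -/

import Mathlib

/-!
Write `N s = ν̂(s) s`. Since `N' ≥ ν_min`, the mean value theorem makes `N` strongly monotone on
`[0, ∞)` with constant `ν_min`. Expanding the inner product and bounding `⟪a, b⟫` by Cauchy–Schwarz
(its coefficient `ν̂(|a|) + ν̂(|b|) - 2 ν_min` is nonnegative) reduces the vector inequality for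
`a = φ + ψ`, `b = φ` to this scalar one at `s = |a|`, `t = |b|`.
-/

open scoped RealInnerProductSpace

theorem Convex.mul_sq_le_sub_mul_sub_of_le_deriv {D : Set ℝ} (hD : Convex ℝ D) {f : ℝ → ℝ}
    (hf : ContinuousOn f D) (hf' : DifferentiableOn ℝ f (interior D)) {C : ℝ}
    (hf'_ge : ∀ x ∈ interior D, C ≤ deriv f x) {s t : ℝ} (hs : s ∈ D) (ht : t ∈ D) :
    C * (s - t) ^ 2 ≤ (f s - f t) * (s - t) := by
  have hslope := hD.mul_sub_le_image_sub_of_le_deriv hf hf' hf'_ge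
  rcases le_total t s with hts | hst
  · nlinarith [hslope t ht s hs hts]
  · nlinarith [hslope s hs t ht hst]

theorem mul_norm_sub_sq_le_inner_smul_sub_smul {E : Type*} [NormedAddCommGroup E]
    [InnerProductSpace ℝ E] {ν : ℝ → ℝ} {c : ℝ} {a b : E} (ha : c ≤ ν ‖a‖) (hb : c ≤ ν ‖b‖)
    (hnorm : c * (‖a‖ - ‖b‖) ^ 2 ≤ (ν ‖a‖ * ‖a‖ - ν ‖b‖ * ‖b‖) * (‖a‖ - ‖b‖)) :
    c * ‖a - b‖ ^ 2 ≤ ⟪ν ‖a‖ • a - ν ‖b‖ • b, a - b⟫ := by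
  have hexpand : ⟪ν ‖a‖ • a - ν ‖b‖ • b, a - b⟫ =
      ν ‖a‖ * ‖a‖ ^ 2 - (ν ‖a‖ + ν ‖b‖) * ⟪a, b⟫ + ν ‖b‖ * ‖b‖ ^ 2 := by
    simp only [inner_sub_left, inner_sub_right, real_inner_smul_left,
      real_inner_self_eq_norm_sq, real_inner_comm b a]
    ring
  rw [hexpand, norm_sub_sq_real]
  nlinarith [real_inner_le_norm a b]

theorem T_strongly_monotone (ν : ℝ → ℝ) (νmin ν₀ : ℝ)
    (hC1 : ContDiffOn ℝ 1 ν (Set.Ici 0))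
    (hbd : ∀ s ≥ (0:ℝ), νmin ≤ ν s ∧ ν s ≤ ν₀)
    (hbd' : ∀ s ≥ (0:ℝ), νmin ≤ deriv (fun t => ν t * t) s ∧
      deriv (fun t => ν t * t) s ≤ ν₀) :
    ∀ φ ψ : EuclideanSpace ℝ (Fin 2),
      νmin * ‖ψ‖ ^ 2 ≤ ⟪(ν ‖φ + ψ‖) • (φ + ψ) - (ν ‖φ‖) • φ, ψ⟫ := by
  intro φ ψ
  have hN_cont : ContinuousOn (fun t => ν t * t) (Set.Ici 0) :=
    hC1.continuousOn.mul continuousOn_id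
  have hN_diff : DifferentiableOn ℝ (fun t => ν t * t) (interior (Set.Ici 0)) :=
    ((hC1.differentiableOn one_ne_zero).mono interior_subset).mul differentiableOn_id
  have hN_deriv : ∀ x ∈ interior (Set.Ici (0:ℝ)), νmin ≤ deriv (fun t => ν t * t) x :=
    fun x hx => (hbd' x (interior_subset hx)).1
  have hnorm := (convex_Ici 0).mul_sq_le_sub_mul_sub_of_le_deriv hN_cont hN_diff hN_deriv
    (Set.mem_Ici.2 (norm_nonneg (φ + ψ))) (Set.mem_Ici.2 (norm_nonneg φ))
  simpa using mul_norm_sub_sq_le_inner_smul_sub_smul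
    (hbd _ (norm_nonneg (φ + ψ))).1 (hbd _ (norm_nonneg φ)).1 hnorm
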